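/- Let Γ be a group generated by a finite symmetric set S and Λ a group generated by a finite symmetric set T, each equipped with a sofic approximation whose approximating sets are connected as labelled graphs, and let (X, d_X) and (X′, d_{X′}) be the associated spaces of graphs with admissible metrics. If there is a bilipschitz equivalence f : X → X′, i.e. a bijection f and a constant C₀ ≥ 1 with (1/C₀)·d_X(x,y) ≤ d_{X′}(f(x), f(y)) ≤ C₀·d_X(x,y) for all x, y ∈ X, then Γ and Λ are bilipschitz equivalent: there exist a bijection F : Γ → Λ and a constant C ≥ 1 such that (1/C)·|g⁻¹h|_S ≤ |F(g)⁻¹F(h)|_T ≤ C·|g⁻¹h|_S for all g, h ∈ Γ. -/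

import Mathlib

open scoped BigOperators symmDiff Classical

universe u v

/-- A sofic approximation of a group `Γ` generated by a finite symmetric set `S`. -/
structure SoficApprox (Γ : Type u) [Group Γ] (S : Finset Γ) where
  F : ℕ → Finset Γ
  F_mono : Monotone F
  F_one : ∀ i, (1 : Γ) ∈ F i
  F_exhausts : ∀ g : Γ, ∃ i, g ∈ F i
  eps : ℕ → ℝ
  eps_pos : ∀ i, 0 < eps i
  eps_lim : Filter.Tendsto eps Filter.atTop (nhds 0)
  X : ℕ → Type
  finX : ∀ i, Finite (X i)
  neX : ∀ i, Nonempty (X i)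
  sigma : (i : ℕ) → Γ → Equiv.Perm (X i)
  Y : (i : ℕ) → Set (X i)
  Y_large : ∀ i, (1 - eps i) * (Nat.card (X i) : ℝ) ≤ ((Y i).ncard : ℝ)
  sigma_mul : ∀ i, ∀ g ∈ F i, ∀ h ∈ F i, ∀ y ∈ Y i, sigma i g (sigma i h y) = sigma i (g * h) y
  sigma_free : ∀ i, ∀ g ∈ F i, g ≠ 1 → ∀ y ∈ Y i, sigma i g y ≠ y

namespace SoficApprox

variable {Γ : Type u} [Group Γ] {S : Finset Γ}

/-- The total space (space of graphs) `X = ⨆ i, X i`. -/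
abbrev Total (A : SoficApprox Γ S) : Type := Σ i, A.X i

/-- The bijection `σ(g)` of the total space acting as `σ_i(g)` on each `X i`. -/
def perm (A : SoficApprox Γ S) (g : Γ) : Equiv.Perm A.Total :=
  Equiv.sigmaCongrRight fun i => A.sigma i g

/-- The continuous extension `σ̄(g)` of `σ(g)` to the Stone–Čech compactification. -/
def permBar (A : SoficApprox Γ S) (g : Γ) : Ultrafilter A.Total → Ultrafilter A.Total :=
  Ultrafilter.map (A.perm g)

/-- The union `Y = ⨆ i, Y i` inside the total space. -/
def Ytot (A : SoficApprox Γ S) : Set A.Total := {p | p.2 ∈ A.Y p.1}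

/-- `∂Y`: free ultrafilters containing `Y`. -/
def bdY (A : SoficApprox Γ S) : Set (Ultrafilter A.Total) :=
  {η | (∀ p : A.Total, η ≠ pure p) ∧ A.Ytot ∈ η}

/-- The core `Z = ⋂_{g ∈ Γ} σ̄(g)''(∂Y)` of the sofic boundary. -/
def core (A : SoficApprox Γ S) : Set (Ultrafilter A.Total) :=
  ⋂ g : Γ, A.permBar g '' A.bdY

/-- The `S`-labelled graph structure on `X i`, with edges `{x, σ_i(s)(x)}` for `s ∈ S`. -/
def graph (A : SoficApprox Γ S) (i : ℕ) : SimpleGraph (A.X i) where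
  Adj x y := x ≠ y ∧ ∃ s ∈ S, A.sigma i s x = y ∨ A.sigma i s y = x
  symm := ⟨fun x y h => ⟨h.1.symm, by obtain ⟨s, hs, h'⟩ := h.2; exact ⟨s, hs, h'.symm⟩⟩⟩
  loopless := ⟨fun x h => h.1 rfl⟩

/-- An admissible metric on the total space: a metric restricting to the edge-path
metric on each `X i` and with distances between distinct components tending to `∞`. -/
def Admissible (A : SoficApprox Γ S) (d : A.Total → A.Total → ℝ) : Prop :=
  (∀ p q, d p q = d q p) ∧
  (∀ p q r, d p r ≤ d p q + d q r) ∧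
  (∀ p q, d p q = 0 ↔ p = q) ∧
  (∀ p q, 0 ≤ d p q) ∧
  (∀ (i : ℕ) (x y : A.X i), d ⟨i, x⟩ ⟨i, y⟩ = ((A.graph i).dist x y : ℝ)) ∧
  (∀ R : ℝ, ∃ N : ℕ, ∀ i j : ℕ, i ≠ j → N ≤ i + j →
      ∀ (x : A.X i) (y : A.X j), R < d ⟨i, x⟩ ⟨j, y⟩)

/-- The entourage `E_R` viewed inside `βX × βX`. -/
def ER (A : SoficApprox Γ S) (d : A.Total → A.Total → ℝ) (R : ℝ) :
    Set (Ultrafilter A.Total × Ultrafilter A.Total) :=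
  {p | ∃ a b : A.Total, d a b ≤ R ∧ p = (pure a, pure b)}

end SoficApprox

/-- Word length of `g` with respect to the generating set `S`. -/
noncomputable def wordLength {Γ : Type u} [Group Γ] (S : Finset Γ) (g : Γ) : ℕ :=
  sInf {n | ∃ l : List Γ, (∀ x ∈ l, x ∈ S) ∧ l.length = n ∧ l.prod = g}

/-- Word length of an element of a free group. -/
noncomputable def fgLength {α : Type v} (w : FreeGroup α) : ℕ :=
  sInf {n | ∃ l : List (α × Bool), l.length = n ∧ FreeGroup.mk l = w}

/-- The canonical homomorphism `F_S → Γ` extending the inclusion `S ↪ Γ`. -/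
noncomputable def pihom {Γ : Type u} [Group Γ] (S : Finset Γ) : FreeGroup ↥S →* Γ :=
  FreeGroup.lift fun s => (s : Γ)

/-- The homomorphism `τ : F_S → Sym(X)` with `τ(s) = σ(s)` for `s ∈ S`. -/
noncomputable def SoficApprox.tau {Γ : Type u} [Group Γ] {S : Finset Γ}
    (A : SoficApprox Γ S) : FreeGroup ↥S →* Equiv.Perm A.Total :=
  FreeGroup.lift fun s => A.perm (s : Γ)

/-! For large `i`, a base point `y ∈ Y_i` gives the chart `g ↦ σ_i(g⁻¹) y`, which on a ball of
radius `M` of `Γ` is an isometry onto a ball of `X_i`: its edges are the `S`-edges, and freeness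
of the action on `Y_i` makes it injective. Since distinct components of an admissible metric
drift apart, `f` maps all but finitely many `X_i` onto some `X'_j`, and as `Y_i` and `Y'_j` each
fill more than half of these equinumerous sets, some `y ∈ Y_i` has `f y ∈ Y'_j`. Reading `f`
through the charts at `y` and `f y` gives maps `q_r : Γ → Λ` that are `C₀`-bilipschitz on the
`r`-ball and hit the `(r / C₀)`-ball of `Λ`; balls being finite, the limit of the `q_r` along an
ultrafilter is the required bijection. -/

open Filter

section WordLength

variable {Γ : Type u} [Group Γ] {S : Finset Γ}

theorem wordLength_le_length {l : List Γ} (hl : ∀ x ∈ l, x ∈ S) :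
    wordLength S l.prod ≤ l.length :=
  Nat.sInf_le ⟨l, hl, rfl, rfl⟩

theorem exists_list_prod_eq (hSsymm : ∀ s ∈ S, s⁻¹ ∈ S)
    (hSgen : Subgroup.closure (S : Set Γ) = ⊤) (g : Γ) :
    ∃ l : List Γ, (∀ x ∈ l, x ∈ S) ∧ l.prod = g := by
  have hS : (S : Set Γ) ∪ (S : Set Γ)⁻¹ = S :=
    Set.union_eq_left.2 fun s hs => by simpa using hSsymm _ hs
  have hg : g ∈ (Subgroup.closure (S : Set Γ)).toSubmonoid := by simp [hSgen]
  rw [Subgroup.closure_toSubmonoid, hS] at hg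
  exact Submonoid.exists_list_of_mem_closure hg

theorem exists_list_length_eq_wordLength (hSsymm : ∀ s ∈ S, s⁻¹ ∈ S)
    (hSgen : Subgroup.closure (S : Set Γ) = ⊤) (g : Γ) :
    ∃ l : List Γ, (∀ x ∈ l, x ∈ S) ∧ l.length = wordLength S g ∧ l.prod = g := by
  obtain ⟨l, hl, rfl⟩ := exists_list_prod_eq hSsymm hSgen g
  exact Nat.sInf_mem (s := {n | ∃ l : List Γ, (∀ x ∈ l, x ∈ S) ∧ l.length = n ∧ l.prod = _})
    ⟨l.length, l, hl, rfl, rfl⟩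

@[simp]
theorem wordLength_one : wordLength S (1 : Γ) = 0 :=
  Nat.le_zero.1 (wordLength_le_length (l := []) (by simp))

theorem wordLength_le_one_of_mem {s : Γ} (hs : s ∈ S) : wordLength S s ≤ 1 := by
  simpa using wordLength_le_length (l := [s]) (by simpa using hs)

theorem wordLength_eq_zero_iff (hSsymm : ∀ s ∈ S, s⁻¹ ∈ S)
    (hSgen : Subgroup.closure (S : Set Γ) = ⊤) {g : Γ} : wordLength S g = 0 ↔ g = 1 := by
  refine ⟨fun h => ?_, fun h => h ▸ wordLength_one⟩
  obtain ⟨l, -, hlen, rfl⟩ := exists_list_length_eq_wordLength hSsymm hSgen g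
  simp [List.length_eq_zero_iff.1 (hlen.trans h)]

theorem wordLength_mul_le (hSsymm : ∀ s ∈ S, s⁻¹ ∈ S)
    (hSgen : Subgroup.closure (S : Set Γ) = ⊤) (g h : Γ) :
    wordLength S (g * h) ≤ wordLength S g + wordLength S h := by
  obtain ⟨l, hl, hlen, rfl⟩ := exists_list_length_eq_wordLength hSsymm hSgen g
  obtain ⟨l', hl', hlen', rfl⟩ := exists_list_length_eq_wordLength hSsymm hSgen h
  rw [← hlen, ← hlen', ← List.length_append, ← List.prod_append]
  exact wordLength_le_length (by simpa [or_imp, forall_and] using And.intro hl hl')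

theorem wordLength_inv_le (hSsymm : ∀ s ∈ S, s⁻¹ ∈ S)
    (hSgen : Subgroup.closure (S : Set Γ) = ⊤) (g : Γ) :
    wordLength S g⁻¹ ≤ wordLength S g := by
  obtain ⟨l, hl, hlen, rfl⟩ := exists_list_length_eq_wordLength hSsymm hSgen g
  rw [← hlen, List.prod_inv_reverse, ← List.length_map (f := (·⁻¹)), ← List.length_reverse]
  exact wordLength_le_length (by simpa using fun x hx => by simpa using hSsymm _ (hl _ hx))

theorem wordLength_inv (hSsymm : ∀ s ∈ S, s⁻¹ ∈ S)
    (hSgen : Subgroup.closure (S : Set Γ) = ⊤) (g : Γ) :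
    wordLength S g⁻¹ = wordLength S g :=
  (wordLength_inv_le hSsymm hSgen g).antisymm (by
    simpa using wordLength_inv_le hSsymm hSgen g⁻¹)

theorem finite_setOf_wordLength_le (hSsymm : ∀ s ∈ S, s⁻¹ ∈ S)
    (hSgen : Subgroup.closure (S : Set Γ) = ⊤) (n : ℕ) :
    {g : Γ | wordLength S g ≤ n}.Finite := by
  refine ((List.finite_length_le S n).image fun l => (l.map (↑)).prod).subset fun g hg => ?_
  obtain ⟨l, hl, hlen, rfl⟩ := exists_list_length_eq_wordLength hSsymm hSgen g
  refine ⟨l.attach.map fun x => ⟨x.1, hl x.1 x.2⟩, by simpa [hlen] using hg, ?_⟩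
  simp [Function.comp_def]

end WordLength

structure IsLocalCayleyChart {Γ : Type u} [Group Γ] {V : Type*} (S : Finset Γ)
    (G : SimpleGraph V) (φ : Γ → V) (M : ℕ) : Prop where
  dist_mul_le_one : ∀ g s, wordLength S g < M → s ∈ S → G.dist (φ g) (φ (g * s)) ≤ 1
  exists_eq_mul_of_adj : ∀ g x, wordLength S g < M → G.Adj (φ g) x → ∃ s ∈ S, x = φ (g * s)
  injOn : Set.InjOn φ {g | wordLength S g ≤ M}

namespace IsLocalCayleyChart

variable {Γ : Type u} [Group Γ] {S : Finset Γ} {V : Type*} {G : SimpleGraph V}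
  {φ : Γ → V} {M : ℕ}

theorem dist_mul_le (hφ : IsLocalCayleyChart S G φ M) (hG : G.Connected)
    (hSsymm : ∀ s ∈ S, s⁻¹ ∈ S) (hSgen : Subgroup.closure (S : Set Γ) = ⊤) {g u : Γ}
    (h : wordLength S g + wordLength S u ≤ M) :
    G.dist (φ g) (φ (g * u)) ≤ wordLength S u := by
  suffices key : ∀ l : List Γ, (∀ x ∈ l, x ∈ S) → ∀ g, wordLength S g + l.length ≤ M →
      G.dist (φ g) (φ (g * l.prod)) ≤ l.length by
    obtain ⟨l, hl, hlen, rfl⟩ := exists_list_length_eq_wordLength hSsymm hSgen u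
    exact hlen ▸ key l hl g (hlen ▸ h)
  intro l hl
  induction l with
  | nil => simp
  | cons s l ih =>
    intro g hg
    have hs : s ∈ S := hl s (by simp)
    have hgs : wordLength S (g * s) ≤ wordLength S g + 1 :=
      (wordLength_mul_le hSsymm hSgen g s).trans (by simpa using wordLength_le_one_of_mem hs)
    rw [List.length_cons] at hg ⊢
    calc G.dist (φ g) (φ (g * (s :: l).prod))
        ≤ G.dist (φ g) (φ (g * s)) + G.dist (φ (g * s)) (φ (g * s * l.prod)) := by
          rw [List.prod_cons, ← mul_assoc]; exact hG.dist_triangle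
      _ ≤ 1 + l.length := add_le_add (hφ.dist_mul_le_one g s (by omega) hs)
          (ih (fun x hx => hl x (by simp [hx])) _ (by omega))
      _ = l.length + 1 := add_comm _ _

theorem exists_mul_eq_of_dist_le (hφ : IsLocalCayleyChart S G φ M) (hG : G.Connected)
    (hSsymm : ∀ s ∈ S, s⁻¹ ∈ S) (hSgen : Subgroup.closure (S : Set Γ) = ⊤) {g : Γ} {x : V}
    {n : ℕ} (hd : G.dist (φ g) x ≤ n) (h : wordLength S g + n ≤ M) :
    ∃ u, wordLength S u ≤ n ∧ φ (g * u) = x := by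
  suffices key : ∀ {a : V} (p : G.Walk a x) (g : Γ), φ g = a → wordLength S g + p.length ≤ M →
      ∃ u, wordLength S u ≤ p.length ∧ φ (g * u) = x by
    obtain ⟨p, hp⟩ := hG.exists_walk_length_eq_dist (φ g) x
    obtain ⟨u, hu, hgu⟩ := key p g rfl (by omega)
    exact ⟨u, by omega, hgu⟩
  clear hd h
  intro a p
  induction p with
  | nil => exact fun g hg _ => ⟨1, by simp, by simpa using hg⟩
  | cons hadj p ih =>
    rintro g rfl hg
    rw [SimpleGraph.Walk.length_cons] at hg ⊢
    obtain ⟨s, hs, rfl⟩ := hφ.exists_eq_mul_of_adj g _ (by omega) hadj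
    have hs1 := wordLength_le_one_of_mem hs
    obtain ⟨u, hu, rfl⟩ := ih (g * s) rfl
      (by have := wordLength_mul_le hSsymm hSgen g s; omega)
    refine ⟨s * u, ?_, by rw [mul_assoc]⟩
    have := wordLength_mul_le hSsymm hSgen s u
    omega

theorem dist_eq (hφ : IsLocalCayleyChart S G φ M) (hG : G.Connected)
    (hSsymm : ∀ s ∈ S, s⁻¹ ∈ S) (hSgen : Subgroup.closure (S : Set Γ) = ⊤) {g h : Γ}
    (hgh : wordLength S g + wordLength S (g⁻¹ * h) ≤ M) :
    G.dist (φ g) (φ h) = wordLength S (g⁻¹ * h) := by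
  have hle : G.dist (φ g) (φ h) ≤ wordLength S (g⁻¹ * h) := by
    simpa using hφ.dist_mul_le hG hSsymm hSgen hgh
  refine hle.antisymm ?_
  obtain ⟨u, hu, hgu⟩ := hφ.exists_mul_eq_of_dist_le hG hSsymm hSgen (g := g) (x := φ h) le_rfl
    (by omega)
  have hmem : ∀ v, wordLength S v ≤ wordLength S (g⁻¹ * h) → g * v ∈ {g | wordLength S g ≤ M} :=
    fun v hv => (wordLength_mul_le hSsymm hSgen g v).trans (by omega)
  have : g * u = h := by
    simpa using hφ.injOn (hmem u (hu.trans hle)) (hmem _ le_rfl) (by simpa using hgu)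
  rwa [← this, inv_mul_cancel_left, this]

theorem dist_eq_of_le (hφ : IsLocalCayleyChart S G φ M) (hG : G.Connected)
    (hSsymm : ∀ s ∈ S, s⁻¹ ∈ S) (hSgen : Subgroup.closure (S : Set Γ) = ⊤) {g h : Γ} {ρ : ℝ}
    (hg : (wordLength S g : ℝ) ≤ ρ) (hh : (wordLength S h : ℝ) ≤ ρ) (hρ : 3 * ρ ≤ M) :
    G.dist (φ g) (φ h) = wordLength S (g⁻¹ * h) := by
  refine hφ.dist_eq hG hSsymm hSgen ?_
  have := wordLength_mul_le hSsymm hSgen g⁻¹ h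
  rw [wordLength_inv hSsymm hSgen] at this
  have : (wordLength S (g⁻¹ * h) : ℝ) ≤ wordLength S g + wordLength S h := by exact_mod_cast this
  exact_mod_cast (show (wordLength S g + wordLength S (g⁻¹ * h) : ℝ) ≤ M by linarith)

theorem dist_one_eq (hφ : IsLocalCayleyChart S G φ M) (hG : G.Connected)
    (hSsymm : ∀ s ∈ S, s⁻¹ ∈ S) (hSgen : Subgroup.closure (S : Set Γ) = ⊤) {g : Γ}
    (hg : wordLength S g ≤ M) : G.dist (φ 1) (φ g) = wordLength S g := by
  simpa using hφ.dist_eq hG hSsymm hSgen (g := 1) (h := g) (by simpa using hg)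

theorem exists_eq_of_dist_one_le (hφ : IsLocalCayleyChart S G φ M) (hG : G.Connected)
    (hSsymm : ∀ s ∈ S, s⁻¹ ∈ S) (hSgen : Subgroup.closure (S : Set Γ) = ⊤) {x : V} {ρ : ℝ}
    (hρ : ρ ≤ M) (hd : (G.dist (φ 1) x : ℝ) ≤ ρ) :
    ∃ u, (wordLength S u : ℝ) ≤ ρ ∧ φ u = x := by
  obtain ⟨u, hu, hφu⟩ := hφ.exists_mul_eq_of_dist_le hG hSsymm hSgen (n := ⌊ρ⌋₊)
    (Nat.le_floor hd) (by simpa using Nat.floor_le_of_le hρ)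
  exact ⟨u, (Nat.cast_le.2 hu).trans (Nat.floor_le ((Nat.cast_nonneg _).trans hd)),
    by simpa using hφu⟩

end IsLocalCayleyChart

theorem exists_local_bilipschitz {Γ Λ : Type u} [Group Γ] [Group Λ] {S : Finset Γ}
    {T : Finset Λ} (hSsymm : ∀ s ∈ S, s⁻¹ ∈ S) (hSgen : Subgroup.closure (S : Set Γ) = ⊤)
    (hTsymm : ∀ t ∈ T, t⁻¹ ∈ T) (hTgen : Subgroup.closure (T : Set Λ) = ⊤)
    {V W : Type*} {G : SimpleGraph V} {H : SimpleGraph W} (hG : G.Connected)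
    (hH : H.Connected) (e : V ≃ W) {C : ℝ} (hC : 1 ≤ C)
    (he : ∀ x z, (H.dist (e x) (e z) : ℝ) ≤ C * G.dist x z ∧
      (G.dist x z : ℝ) ≤ C * H.dist (e x) (e z))
    {φ : Γ → V} {ψ : Λ → W} {M r : ℕ} (hM : 3 * C * r ≤ M)
    (hφ : IsLocalCayleyChart S G φ M) (hψ : IsLocalCayleyChart T H ψ M)
    (hbase : e (φ 1) = ψ 1) :
    ∃ q : Γ → Λ, q 1 = 1 ∧
      (∀ g h, wordLength S g ≤ r → wordLength S h ≤ r →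
        (wordLength S (g⁻¹ * h) : ℝ) ≤ C * wordLength T ((q g)⁻¹ * q h) ∧
        (wordLength T ((q g)⁻¹ * q h) : ℝ) ≤ C * wordLength S (g⁻¹ * h)) ∧
      ∀ t, C * wordLength T t ≤ r → ∃ g, wordLength S g ≤ r ∧ q g = t := by
  have hrM : 3 * (r : ℝ) ≤ M := by nlinarith [r.cast_nonneg (α := ℝ)]
  have hCrM : 3 * (C * r) ≤ M := by linarith
  have hrM' : r ≤ M := by exact_mod_cast (show (r : ℝ) ≤ M by linarith)
  set ψinv := Function.invFunOn ψ {t | wordLength T t ≤ M}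
  have hψinv : ∀ t, (wordLength T t : ℝ) ≤ C * r → ψinv (ψ t) = t := fun t ht =>
    hψ.injOn.leftInvOn_invFunOn (show wordLength T t ≤ M by
      exact_mod_cast (show (wordLength T t : ℝ) ≤ M by nlinarith))
  have hlift : ∀ g, wordLength S g ≤ r →
      ∃ t, (wordLength T t : ℝ) ≤ C * r ∧ ψ t = e (φ g) := fun g hg =>
    hψ.exists_eq_of_dist_one_le hH hTsymm hTgen (by linarith) <|
      calc (H.dist (ψ 1) (e (φ g)) : ℝ) ≤ C * G.dist (φ 1) (φ g) := hbase ▸ (he _ _).1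
        _ ≤ C * r := by
          rw [hφ.dist_one_eq hG hSsymm hSgen (hg.trans hrM')]
          gcongr
  refine ⟨fun g => ψinv (e (φ g)), ?_, fun g h hg hh => ?_, fun t ht => ?_⟩
  · simp only [hbase]
    exact hψinv 1 (by simp; positivity)
  · obtain ⟨t, ht, hψt⟩ := hlift g hg
    obtain ⟨t', ht', hψt'⟩ := hlift h hh
    have hdG := hφ.dist_eq_of_le hG hSsymm hSgen (ρ := r) (by exact_mod_cast hg)
      (by exact_mod_cast hh) hrM
    have hdH := hψ.dist_eq_of_le hH hTsymm hTgen ht ht' hCrM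
    simp only [← hψt, ← hψt', hψinv t ht, hψinv t' ht']
    have := he (φ g) (φ h)
    rw [hdG, ← hψt, ← hψt', hdH] at this
    exact this.symm
  · have htr : (wordLength T t : ℝ) ≤ r :=
      (le_mul_of_one_le_left (Nat.cast_nonneg _) hC).trans ht
    have htM : wordLength T t ≤ M := (show wordLength T t ≤ r by exact_mod_cast htr).trans hrM'
    obtain ⟨g, hg, hφg⟩ := hφ.exists_eq_of_dist_one_le hG hSsymm hSgen (ρ := r) (by linarith) <|
      calc (G.dist (φ 1) (e.symm (ψ t)) : ℝ) ≤ C * H.dist (e (φ 1)) (e (e.symm (ψ t))) :=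
            (he _ _).2
        _ = C * wordLength T t := by
          rw [hbase, e.apply_symm_apply, hψ.dist_one_eq hH hTsymm hTgen htM]
        _ ≤ r := ht
    exact ⟨g, by exact_mod_cast hg, by simp only [hφg, e.apply_symm_apply, hψinv t (by nlinarith)]⟩

namespace SoficApprox

variable {Γ : Type u} [Group Γ] {S : Finset Γ}

def chart (A : SoficApprox Γ S) (i : ℕ) (y : A.X i) (g : Γ) : A.X i :=
  A.sigma i g⁻¹ y

variable {A : SoficApprox Γ S} {i : ℕ} {y : A.X i}

theorem sigma_one_apply (hy : y ∈ A.Y i) : A.sigma i 1 y = y :=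
  (A.sigma i 1).injective (by rw [A.sigma_mul i 1 (A.F_one i) 1 (A.F_one i) y hy, one_mul])

theorem chart_one (hy : y ∈ A.Y i) : A.chart i y 1 = y := by
  rw [chart, inv_one, sigma_one_apply hy]

theorem sigma_chart (hy : y ∈ A.Y i) {u v : Γ} (hu : u ∈ A.F i) (hv : v⁻¹ ∈ A.F i) :
    A.sigma i u (A.chart i y v) = A.chart i y (v * u⁻¹) := by
  rw [chart, chart, A.sigma_mul i u hu v⁻¹ hv y hy, mul_inv_rev, inv_inv]

theorem isLocalCayleyChart_chart (hSsymm : ∀ s ∈ S, s⁻¹ ∈ S)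
    (hSgen : Subgroup.closure (S : Set Γ) = ⊤) (hy : y ∈ A.Y i) {M : ℕ}
    (hF : ∀ g, wordLength S g ≤ 2 * M → g ∈ A.F i) :
    IsLocalCayleyChart S (A.graph i) (A.chart i y) M := by
  have hF' : ∀ g, wordLength S g ≤ 2 * M → g ∈ A.F i ∧ g⁻¹ ∈ A.F i := fun g hg =>
    ⟨hF g hg, hF g⁻¹ (by rwa [wordLength_inv hSsymm hSgen])⟩
  have hmul : ∀ g s, wordLength S g < M → s ∈ S → wordLength S (g * s) ≤ 2 * M := fun g s hg hs =>
    (wordLength_mul_le hSsymm hSgen g s).trans (by have := wordLength_le_one_of_mem hs; omega)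
  have hstep : ∀ g s, wordLength S g < M → s ∈ S →
      A.sigma i s (A.chart i y (g * s)) = A.chart i y g := fun g s hg hs => by
    rw [sigma_chart hy (hF s (by have := wordLength_le_one_of_mem hs; omega))
      (hF' _ (hmul g s hg hs)).2, mul_inv_cancel_right]
  refine ⟨fun g s hg hs => ?_, fun g x hg hadj => ?_,
    fun g (hg : wordLength S g ≤ M) h (hh : wordLength S h ≤ M) heq => ?_⟩
  · by_cases heq : A.chart i y g = A.chart i y (g * s)
    · simp [heq]
    · exact (SimpleGraph.dist_eq_one_iff_adj.2
        (show (A.graph i).Adj _ _ from ⟨heq, s, hs, Or.inr (hstep g s hg hs)⟩)).le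
  · obtain ⟨-, t, ht, hx⟩ := hadj
    rcases hx with rfl | hx
    · refine ⟨t⁻¹, hSsymm t ht, ?_⟩
      rw [sigma_chart hy (hF t (by have := wordLength_le_one_of_mem ht; omega))
        (hF' g (by omega)).2]
    · exact ⟨t, ht, (A.sigma i t).injective (hx.trans (hstep g t hg ht).symm)⟩
  · have hgh : wordLength S (h * g⁻¹) ≤ 2 * M := by
      have := wordLength_mul_le hSsymm hSgen h g⁻¹
      rw [wordLength_inv hSsymm hSgen] at this
      omega
    have hfix : A.sigma i (h * g⁻¹) y = y := by
      have := congrArg (A.sigma i h) heq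
      rwa [sigma_chart hy (hF' h (by omega)).1 (hF' g (by omega)).2,
        sigma_chart hy (hF' h (by omega)).1 (hF' h (by omega)).2, mul_inv_cancel, chart_one hy,
        chart, mul_inv_rev, inv_inv] at this
    by_contra hne
    exact A.sigma_free i _ (hF _ hgh) (fun h1 => hne (mul_inv_eq_one.1 h1).symm) y hy hfix

end SoficApprox

theorem Equiv.exists_mem_apply_mem_of_card_lt {α β : Type*} [Finite α] (e : α ≃ β)
    {s : Set α} {t : Set β} (h : Nat.card α < s.ncard + t.ncard) : ∃ x ∈ s, e x ∈ t := by
  by_contra! hst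
  have hdisj : Disjoint s (e ⁻¹' t) := Set.disjoint_left.2 fun x hx hxt => hst x hx hxt
  have ht : (e ⁻¹' t).ncard = t.ncard :=
    Set.ncard_preimage_of_injective_subset_range e.injective (by simp)
  have := Set.ncard_le_card (s ∪ e ⁻¹' t)
  rw [Set.ncard_union_eq hdisj, ht] at this
  omega

theorem exists_equiv_of_fst_iff {ι κ : Type*} {X : ι → Type*} {Y : κ → Type*}
    (E : (Σ i, X i) ≃ Σ j, Y j) {i : ι} {j : κ} (h : ∀ p, p.1 = i ↔ (E p).1 = j) :
    ∃ e : X i ≃ Y j, ∀ x, E ⟨i, x⟩ = ⟨j, e x⟩ := by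
  refine ⟨(Equiv.sigmaSubtype i).symm.trans
    ((E.subtypeEquiv h).trans (Equiv.sigmaSubtype j)), fun x => ?_⟩
  have hj : (E ⟨i, x⟩).1 = j := (h ⟨i, x⟩).1 rfl
  exact (congrArg Subtype.val ((Equiv.sigmaSubtype j).symm_apply_apply ⟨_, hj⟩)).symm

theorem eventually_lt_fst_apply {X Y : ℕ → Type*} [∀ j, Finite (Y j)]
    {φ : (Σ i, X i) → Σ j, Y j} (hφ : Function.Injective φ) (K : ℕ) :
    ∀ᶠ i in atTop, ∀ x : X i, K < (φ ⟨i, x⟩).1 := by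
  have hlow : {p : Σ j, Y j | p.1 ≤ K}.Finite :=
    ((Set.finite_Iic K).biUnion fun j _ => Set.finite_range (Sigma.mk j)).subset
      fun p hp => Set.mem_biUnion (x := p.1) hp ⟨p.2, rfl⟩
  obtain ⟨I, hI⟩ := ((hlow.preimage hφ.injOn).image Sigma.fst).bddAbove
  filter_upwards [eventually_gt_atTop I] with i hi x
  by_contra! hx
  exact absurd (hI ⟨⟨i, x⟩, hx, rfl⟩) (not_le.2 hi)

namespace SoficApprox

variable {Γ : Type u} [Group Γ] {S : Finset Γ} {Λ : Type u} [Group Λ] {T : Finset Λ}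
  {A : SoficApprox Γ S} {B : SoficApprox Λ T}

theorem eventually_forall_mem_F (hSsymm : ∀ s ∈ S, s⁻¹ ∈ S)
    (hSgen : Subgroup.closure (S : Set Γ) = ⊤) (A : SoficApprox Γ S) (n : ℕ) :
    ∀ᶠ i in atTop, ∀ g, wordLength S g ≤ n → g ∈ A.F i := by
  refine (eventually_all_finite (finite_setOf_wordLength_le hSsymm hSgen n)).2 fun g _ => ?_
  obtain ⟨k, hk⟩ := A.F_exhausts g
  exact eventually_atTop.2 ⟨k, fun i hi => A.F_mono hi hk⟩

theorem card_lt_two_mul_ncard_Y (hi : A.eps i < 1 / 2) : Nat.card (A.X i) < 2 * (A.Y i).ncard := by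
  have := A.finX i
  have := A.neX i
  have hpos : (0 : ℝ) < Nat.card (A.X i) := by exact_mod_cast Nat.card_pos
  exact_mod_cast (show (Nat.card (A.X i) : ℝ) < 2 * (A.Y i).ncard by nlinarith [A.Y_large i])

theorem Admissible.exists_fst_apply_eq {dX : A.Total → A.Total → ℝ}
    {dX' : B.Total → B.Total → ℝ} (hdX : A.Admissible dX) (hdX' : B.Admissible dX')
    (hconn : ∀ i, (A.graph i).Connected) {φ : A.Total → B.Total} {C : ℝ}
    (hφ : ∀ p q, dX' (φ p) (φ q) ≤ C * dX p q) :
    ∃ N, ∀ i (x z : A.X i), N ≤ (φ ⟨i, x⟩).1 → (φ ⟨i, z⟩).1 = (φ ⟨i, x⟩).1 := by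
  obtain ⟨N, hN⟩ := hdX'.2.2.2.2.2 C
  refine ⟨N, fun i x z hx => ?_⟩
  -- an edge has length `1`, so its image is too short to join two far-out components
  have hstep : ∀ a b : A.X i, (A.graph i).Adj a b → N ≤ (φ ⟨i, a⟩).1 →
      (φ ⟨i, b⟩).1 = (φ ⟨i, a⟩).1 := by
    intro a b hab ha
    by_contra hne
    have hd : dX ⟨i, a⟩ ⟨i, b⟩ = 1 := by
      rw [hdX.2.2.2.2.1, SimpleGraph.dist_eq_one_iff_adj.2 hab, Nat.cast_one]
    have : C < dX' (φ ⟨i, a⟩) (φ ⟨i, b⟩) :=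
      hN _ _ (Ne.symm hne) (by omega) (φ ⟨i, a⟩).2 (φ ⟨i, b⟩).2
    have := hφ ⟨i, a⟩ ⟨i, b⟩
    rw [hd, mul_one] at this
    linarith
  obtain ⟨p⟩ := hconn i x z
  induction p with
  | nil => rfl
  | cons hab p ih => exact (ih (hstep _ _ hab hx ▸ hx)).trans (hstep _ _ hab hx)

theorem eventually_exists_equiv_restrict {dX : A.Total → A.Total → ℝ}
    {dX' : B.Total → B.Total → ℝ} (hdX : A.Admissible dX) (hdX' : B.Admissible dX')
    (hconnA : ∀ i, (A.graph i).Connected) (hconnB : ∀ i, (B.graph i).Connected)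
    (E : A.Total ≃ B.Total) {C : ℝ} (hE : ∀ p q, dX' (E p) (E q) ≤ C * dX p q)
    (hE' : ∀ p q, dX (E.symm p) (E.symm q) ≤ C * dX' p q) {P : ℕ → Prop}
    (hP : ∀ᶠ j in atTop, P j) :
    ∀ᶠ i in atTop, ∃ j, P j ∧ ∃ e : A.X i ≃ B.X j, ∀ x, E ⟨i, x⟩ = ⟨j, e x⟩ := by
  obtain ⟨N₁, hN₁⟩ := hdX.exists_fst_apply_eq hdX' hconnA hE
  obtain ⟨N₂, hN₂⟩ := hdX'.exists_fst_apply_eq hdX hconnB hE'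
  obtain ⟨N₃, hN₃⟩ := eventually_atTop.1 hP
  have := B.finX
  filter_upwards [eventually_lt_fst_apply E.injective (max N₁ N₃), eventually_ge_atTop N₂]
    with i hi hiN₂
  obtain ⟨x₀⟩ := A.neX i
  set j := (E ⟨i, x₀⟩).1
  have hij : ∀ x, (E ⟨i, x⟩).1 = j := fun x => hN₁ i x₀ x (by have := hi x₀; omega)
  have hji : ∀ q : B.Total, q.1 = j → (E.symm q).1 = i := by
    have h₀ : E.symm ⟨j, (E ⟨i, x₀⟩).2⟩ = ⟨i, x₀⟩ := by rw [Sigma.eta, E.symm_apply_apply]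
    rintro ⟨_, x'⟩ rfl
    rw [hN₂ j _ x' (by rw [h₀]; exact hiN₂), h₀]
  refine ⟨j, hN₃ j (by have := hi x₀; omega), exists_equiv_of_fst_iff E fun p => ?_⟩
  exact ⟨by rintro rfl; exact hij p.2, fun h => by simpa using hji (E p) h⟩

end SoficApprox

theorem exists_bijective_bilipschitz_of_forall_local {Γ Λ : Type*} [Group Γ] [Group Λ]
    {ℓ : Γ → ℕ} {ℓ' : Λ → ℕ} (hℓ : ∀ g, ℓ g = 0 ↔ g = 1) (hℓ' : ℓ' 1 = 0)
    (hℓfin : ∀ n, {g | ℓ g ≤ n}.Finite) (hℓ'fin : ∀ n, {t | ℓ' t ≤ n}.Finite) {C : ℝ}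
    (q : ℕ → Γ → Λ) (hq1 : ∀ r, q r 1 = 1)
    (hq : ∀ r g h, ℓ g ≤ r → ℓ h ≤ r →
      (ℓ (g⁻¹ * h) : ℝ) ≤ C * ℓ' ((q r g)⁻¹ * q r h) ∧
      (ℓ' ((q r g)⁻¹ * q r h) : ℝ) ≤ C * ℓ (g⁻¹ * h))
    (hsurj : ∀ (r : ℕ) t, C * ℓ' t ≤ r → ∃ g, ℓ g ≤ r ∧ q r g = t) :
    ∃ F : Γ → Λ, Function.Bijective F ∧ ∀ g h,
      (ℓ (g⁻¹ * h) : ℝ) ≤ C * ℓ' ((F g)⁻¹ * F h) ∧ (ℓ' ((F g)⁻¹ * F h) : ℝ) ≤ C * ℓ (g⁻¹ * h) := by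
  set U := hyperfilter ℕ
  have hU : ∀ n, ∀ᶠ r in U, n ≤ r := fun n =>
    (eventually_ge_atTop n).filter_mono Nat.hyperfilter_le_atTop
  have hℓ1 : ℓ 1 = 0 := (hℓ 1).2 rfl
  have hball : ∀ r g, ℓ g ≤ r → ℓ g ≤ C * ℓ' (q r g) ∧ (ℓ' (q r g) : ℝ) ≤ C * ℓ g := by
    intro r g hg
    simpa [hq1] using hq r 1 g (by omega) hg
  have hstab : ∀ g, ∃ t, ∀ᶠ r in U, q r g = t := by
    intro g
    obtain ⟨t, -, ht⟩ := (Ultrafilter.eventually_exists_mem_iff (P := fun t r => q r g = t)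
        (hℓ'fin ⌊C * ℓ g⌋₊)).1 <| by
      filter_upwards [hU (ℓ g)] with r hr
      exact ⟨q r g, Nat.le_floor (hball r g hr).2, rfl⟩
    exact ⟨t, ht⟩
  choose F hF using hstab
  have hbound : ∀ g h, (ℓ (g⁻¹ * h) : ℝ) ≤ C * ℓ' ((F g)⁻¹ * F h) ∧
      (ℓ' ((F g)⁻¹ * F h) : ℝ) ≤ C * ℓ (g⁻¹ * h) := by
    intro g h
    obtain ⟨r, hrg, hrh, hr⟩ := ((hF g).and ((hF h).and (hU (max (ℓ g) (ℓ h))))).exists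
    simpa [hrg, hrh] using hq r g h (le_of_max_le_left hr) (le_of_max_le_right hr)
  refine ⟨F, ⟨fun g h hgh => ?_, fun t => ?_⟩, hbound⟩
  · have := (hbound g h).1
    rw [hgh, inv_mul_cancel, hℓ'] at this
    exact inv_mul_eq_one.1 ((hℓ _).1 (by simpa using this))
  · obtain ⟨g, -, hg⟩ := (Ultrafilter.eventually_exists_mem_iff (P := fun g r => q r g = t)
        (hℓfin ⌊C * ℓ' t⌋₊)).1 <| by
      filter_upwards [hU ⌈C * ℓ' t⌉₊] with r hr
      obtain ⟨g, hgr, rfl⟩ := hsurj r t ((Nat.le_ceil _).trans (by exact_mod_cast hr))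
      exact ⟨g, Nat.le_floor (hball r g hgr).1, rfl⟩
    obtain ⟨r, hr, hr'⟩ := (hg.and (hF g)).exists
    exact ⟨g, hr' ▸ hr⟩

namespace SoficApprox

theorem exists_local_bilipschitz_of_bilipschitz_equivalence {Γ : Type u} [Group Γ]
    {S : Finset Γ} {Λ : Type u} [Group Λ] {T : Finset Λ}
    (hSsymm : ∀ s ∈ S, s⁻¹ ∈ S) (hSgen : Subgroup.closure (S : Set Γ) = ⊤)
    (hTsymm : ∀ t ∈ T, t⁻¹ ∈ T) (hTgen : Subgroup.closure (T : Set Λ) = ⊤)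
    {A : SoficApprox Γ S} {B : SoficApprox Λ T}
    (hconnA : ∀ i, (A.graph i).Connected) (hconnB : ∀ i, (B.graph i).Connected)
    {dX : A.Total → A.Total → ℝ} (hdX : A.Admissible dX)
    {dX' : B.Total → B.Total → ℝ} (hdX' : B.Admissible dX')
    (E : A.Total ≃ B.Total) {C₀ : ℝ} (hC₀ : 1 ≤ C₀)
    (hbilip : ∀ p q : A.Total,
      (1 / C₀) * dX p q ≤ dX' (E p) (E q) ∧ dX' (E p) (E q) ≤ C₀ * dX p q) (r : ℕ) :
    ∃ q : Γ → Λ, q 1 = 1 ∧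
      (∀ g h, wordLength S g ≤ r → wordLength S h ≤ r →
        (wordLength S (g⁻¹ * h) : ℝ) ≤ C₀ * wordLength T ((q g)⁻¹ * q h) ∧
        (wordLength T ((q g)⁻¹ * q h) : ℝ) ≤ C₀ * wordLength S (g⁻¹ * h)) ∧
      ∀ t, C₀ * wordLength T t ≤ r → ∃ g, wordLength S g ≤ r ∧ q g = t := by
  have hC₀pos : 0 < C₀ := one_pos.trans_le hC₀
  have hlower : ∀ p q, dX p q ≤ C₀ * dX' (E p) (E q) := fun p q => by
    have := (hbilip p q).1
    rw [one_div, inv_mul_le_iff₀ hC₀pos] at this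
    exact this
  set M := ⌈3 * C₀ * r⌉₊
  have hgood : ∀ {Γ : Type u} [Group Γ] {S : Finset Γ} (A : SoficApprox Γ S),
      (∀ s ∈ S, s⁻¹ ∈ S) → Subgroup.closure (S : Set Γ) = ⊤ →
      ∀ᶠ i in atTop, (∀ g, wordLength S g ≤ 2 * M → g ∈ A.F i) ∧ A.eps i < 1 / 2 :=
    fun A hsymm hgen => (eventually_forall_mem_F hsymm hgen A _).and
      (A.eps_lim.eventually_lt_const (by norm_num))
  obtain ⟨i, ⟨hFA, hεA⟩, j, ⟨hFB, hεB⟩, e, he⟩ :=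
    ((hgood A hSsymm hSgen).and (eventually_exists_equiv_restrict hdX hdX' hconnA hconnB E
      (fun p q => (hbilip p q).2) (fun p q => by simpa using hlower (E.symm p) (E.symm q))
      (hgood B hTsymm hTgen))).exists
  have := A.finX i
  obtain ⟨y, hy, hy'⟩ := e.exists_mem_apply_mem_of_card_lt (s := A.Y i) (t := B.Y j) <| by
    have := card_lt_two_mul_ncard_Y hεA
    have := card_lt_two_mul_ncard_Y hεB
    have := Nat.card_congr e
    omega
  have hdist : ∀ x z, ((B.graph j).dist (e x) (e z) : ℝ) ≤ C₀ * (A.graph i).dist x z ∧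
      ((A.graph i).dist x z : ℝ) ≤ C₀ * (B.graph j).dist (e x) (e z) := fun x z => by
    have h₁ := (hbilip ⟨i, x⟩ ⟨i, z⟩).2
    have h₂ := hlower ⟨i, x⟩ ⟨i, z⟩
    rw [he, he, hdX.2.2.2.2.1, hdX'.2.2.2.2.1] at h₁ h₂
    exact ⟨h₁, h₂⟩
  exact exists_local_bilipschitz hSsymm hSgen hTsymm hTgen (hconnA i) (hconnB j) e hC₀ hdist
    (Nat.le_ceil _) (isLocalCayleyChart_chart hSsymm hSgen hy hFA)
    (isLocalCayleyChart_chart hTsymm hTgen hy' hFB) (by rw [chart_one hy, chart_one hy'])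

end SoficApprox

open SoficApprox in
/-- **Bilipschitz equivalent sofic approximations give bilipschitz equivalent groups.**
If the spaces of graphs of sofic approximations of `Γ = ⟨S⟩` and `Λ = ⟨T⟩` (with connected
approximating graphs and admissible metrics) are bilipschitz equivalent, then `Γ` and `Λ`
are bilipschitz equivalent. -/
theorem bilipschitz_of_bilipschitz_equivalence
    {Γ : Type u} [Group Γ] {S : Finset Γ}
    {Λ : Type u} [Group Λ] {T : Finset Λ}
    (hSsymm : ∀ s ∈ S, s⁻¹ ∈ S) (hSgen : Subgroup.closure (S : Set Γ) = ⊤)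
    (hTsymm : ∀ t ∈ T, t⁻¹ ∈ T) (hTgen : Subgroup.closure (T : Set Λ) = ⊤)
    (A : SoficApprox Γ S) (B : SoficApprox Λ T)
    (hconnA : ∀ i, (A.graph i).Connected) (hconnB : ∀ i, (B.graph i).Connected)
    (dX : A.Total → A.Total → ℝ) (hdX : A.Admissible dX)
    (dX' : B.Total → B.Total → ℝ) (hdX' : B.Admissible dX')
    (f : A.Total → B.Total) (hfbij : Function.Bijective f)
    (C₀ : ℝ) (hC₀ : 1 ≤ C₀)
    (hbilip : ∀ p q : A.Total,
      (1 / C₀) * dX p q ≤ dX' (f p) (f q) ∧ dX' (f p) (f q) ≤ C₀ * dX p q) :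
    ∃ (F : Γ → Λ) (C : ℝ), Function.Bijective F ∧ 1 ≤ C ∧
      ∀ g h : Γ,
        (1 / C) * (wordLength S (g⁻¹ * h) : ℝ) ≤ (wordLength T ((F g)⁻¹ * F h) : ℝ) ∧
        (wordLength T ((F g)⁻¹ * F h) : ℝ) ≤ C * (wordLength S (g⁻¹ * h) : ℝ) := by
  choose q hq1 hq hsurj using fun r =>
    exists_local_bilipschitz_of_bilipschitz_equivalence
      hSsymm hSgen hTsymm hTgen hconnA hconnB hdX hdX' (Equiv.ofBijective f hfbij) hC₀ hbilip r
  obtain ⟨F, hFbij, hF⟩ := exists_bijective_bilipschitz_of_forall_local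
    (fun g => wordLength_eq_zero_iff hSsymm hSgen) wordLength_one
    (finite_setOf_wordLength_le hSsymm hSgen) (finite_setOf_wordLength_le hTsymm hTgen)
    q hq1 hq hsurj
  refine ⟨F, C₀, hFbij, hC₀, fun g h => ⟨?_, (hF g h).2⟩⟩
  rw [one_div, inv_mul_le_iff₀ (one_pos.trans_le hC₀)]
  exact (hF g h).1
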